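/- Let D ≥ 1 and let G : (Fin D → ℝ) → Matrix (Fin D) (Fin D) ℝ be continuously differentiable with G p symmetric and invertible for every p. Define the Christoffel symbols Γ : (Fin D → ℝ) → Fin D → Fin D → Fin D → ℝ by Γ p A B C = (1/2) * Σ_E ((G p)⁻¹) A E * (∂_B (fun q => G q E C) p + ∂_C (fun q => G q E B) p - ∂_E (fun q => G q B C) p), where ∂_B denotes the partial derivative in the B-th coordinate direction of Fin D → ℝ. Let η : Matrix (Fin 3) (Fin 3) ℝ be the Minkowski matrix diagonal ![-1, 1, 1] (so η⁻¹ = η), and let u : (Fin 3 → ℝ) → (Fin D → ℝ) be twice continuously differentiable. Define T : (Fin 3 → ℝ) → Matrix (Fin 3) (Fin 3) ℝ by T x α β = Σ_{A,B} G (u x) A B * ∂_α u^A x * ∂_β u^B x - (1/2) * η α β * Σ_{λ,μ,A,B} η λ μ * G (u x) A B * ∂_λ u^A x * ∂_μ u^B x, and the wave-map operator W x A = Σ_{λ,μ} η λ μ * (∂_λ (∂_μ u^A) x + Σ_{B,C} Γ (u x) A B C * ∂_λ u^B x * ∂_μ u^C x). Then at every x: Σ_α ∂_α (fun y => Σ_{λ,μ}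 η α λ * η β μ * T y λ μ) x = Σ_{A,B,γ} G (u x) A B * W x A * η β γ * ∂_γ u^B x, for every β. -/

import Mathlib

attribute [local instance] Matrix.normedAddCommGroup Matrix.normedSpace

/-- Partial derivative in the `B`-th coordinate direction of `Fin n → ℝ`. -/
noncomputable def pd {n : ℕ} (B : Fin n) (f : (Fin n → ℝ) → ℝ) (p : Fin n → ℝ) : ℝ :=
  fderiv ℝ f p (Pi.single B 1)

/-- Christoffel symbols of the target metric `G`. -/
noncomputable def Γchr {D : ℕ} (G : (Fin D → ℝ) → Matrix (Fin D) (Fin D) ℝ)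
    (p : Fin D → ℝ) (A B C : Fin D) : ℝ :=
  (1/2) * ∑ E : Fin D, (G p)⁻¹ A E *
    (pd B (fun q => G q E C) p + pd C (fun q => G q E B) p - pd E (fun q => G q B C) p)

/-- The Minkowski matrix `diag(-1, 1, 1)` on 3-dimensional spacetime. -/
noncomputable def ηmink : Matrix (Fin 3) (Fin 3) ℝ := Matrix.diagonal ![-1, 1, 1]

/-- Stress-energy tensor `T_{αβ} = ∂_α u · ∂_β u − (1/2) η_{αβ} ∂_λ u · ∂^λ u` of a map
`u` from 3-dimensional Minkowski space into `(ℝ^D, G)`. -/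
noncomputable def stressEnergy {D : ℕ} (G : (Fin D → ℝ) → Matrix (Fin D) (Fin D) ℝ)
    (u : (Fin 3 → ℝ) → (Fin D → ℝ)) (x : Fin 3 → ℝ) : Matrix (Fin 3) (Fin 3) ℝ :=
  Matrix.of fun α β =>
    (∑ A : Fin D, ∑ B : Fin D,
        G (u x) A B * pd α (fun y => u y A) x * pd β (fun y => u y B) x)
    - (1/2) * ηmink α β *
      ∑ lam : Fin 3, ∑ mu : Fin 3, ∑ A : Fin D, ∑ B : Fin D,
        ηmink lam mu * G (u x) A B * pd lam (fun y => u y A) x * pd mu (fun y => u y B) x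

/-- Wave-map operator `W^A = η^{λμ}(∂_λ ∂_μ u^A + Γ^A_{BC} ∂_λ u^B ∂_μ u^C)`. -/
noncomputable def waveMapOp {D : ℕ} (G : (Fin D → ℝ) → Matrix (Fin D) (Fin D) ℝ)
    (u : (Fin 3 → ℝ) → (Fin D → ℝ)) (x : Fin 3 → ℝ) (A : Fin D) : ℝ :=
  ∑ lam : Fin 3, ∑ mu : Fin 3, ηmink lam mu *
    (pd lam (fun y => pd mu (fun z => u z A) y) x +
      ∑ B : Fin D, ∑ C : Fin D,
        Γchr G (u x) A B C * pd lam (fun y => u y B) x * pd mu (fun y => u y C) x)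

/-! The Christoffel symbols are built so that the metric is parallel: `∂_V G = G Γ(V) + Γ(V)ᵀ G`.
Hence the energy density `E_{λμ} = ∂_λ u · ∂_μ u` obeys the product rule
`∂_α E_{λμ} = ∇_α ∂_λ u · ∂_μ u + ∂_λ u · ∇_α ∂_μ u`, where the covariant Hessian
`∇_α ∂_λ u = ∂_α ∂_λ u + Γ(∂_α u, ∂_λ u)` is symmetric in `α, λ`. After contracting with
`η^{αλ} η^{βμ}`, the second term cancels against the derivative of the trace part
`-(1/2) η_{λμ} η^{ρσ} E_{ρσ}` of `T` (this uses `η² = 1`), and the first is `η^{βμ} W · ∂_μ u`. -/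

section PartialDerivatives

variable {n : ℕ} {f g : (Fin n → ℝ) → ℝ} {p : Fin n → ℝ} {α : Fin n}

theorem pd_sub (hf : DifferentiableAt ℝ f p) (hg : DifferentiableAt ℝ g p) :
    pd α (fun q => f q - g q) p = pd α f p - pd α g p := by
  simp [pd, fderiv_fun_sub hf hg]

theorem pd_mul (hf : DifferentiableAt ℝ f p) (hg : DifferentiableAt ℝ g p) :
    pd α (fun q => f q * g q) p = pd α f p * g p + f p * pd α g p := by
  simp [pd, fderiv_fun_mul hf hg]
  ring

theorem pd_const_mul (hf : DifferentiableAt ℝ f p) (c : ℝ) :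
    pd α (fun q => c * f q) p = c * pd α f p := by
  simp [pd, fderiv_const_mul hf c]

theorem pd_sum {ι : Type*} (s : Finset ι) {F : ι → (Fin n → ℝ) → ℝ}
    (hF : ∀ i ∈ s, DifferentiableAt ℝ (F i) p) :
    pd α (fun q => ∑ i ∈ s, F i q) p = ∑ i ∈ s, pd α (F i) p := by
  simp [pd, fderiv_fun_sum hF]

theorem contDiff_pd {m : ℕ} (hf : ContDiff ℝ (m + 1) f) : ContDiff ℝ m (pd α f) :=
  (hf.fderiv_right le_rfl).clm_apply contDiff_const

theorem pd_comm (hf : ContDiff ℝ 2 f) (β : Fin n) : pd α (pd β f) p = pd β (pd α f) p := by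
  have hdf : DifferentiableAt ℝ (fderiv ℝ f) p :=
    ((hf.fderiv_right (m := 1) le_rfl).differentiable one_ne_zero).differentiableAt
  have hpd : ∀ γ δ : Fin n,
      pd γ (pd δ f) p = fderiv ℝ (fderiv ℝ f) p (Pi.single γ 1) (Pi.single δ 1) := by
    intro γ δ
    unfold pd
    rw [fderiv_clm_apply hdf (differentiableAt_const _)]
    simp
  rw [hpd, hpd, hf.contDiffAt.isSymmSndFDerivAt (by simp)]

theorem pd_comp {D : ℕ} {f : (Fin D → ℝ) → ℝ} {u : (Fin n → ℝ) → Fin D → ℝ}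
    (hf : DifferentiableAt ℝ f (u p)) (hu : DifferentiableAt ℝ u p) :
    pd α (fun q => f (u q)) p = ∑ C, pd C f (u p) * pd α (fun q => u q C) p := by
  have hcoord : ∀ C, pd α (fun q => u q C) p = fderiv ℝ u p (Pi.single α 1) C := fun C => by
    simp [pd, fderiv_apply hu]
  rw [pd, fderiv_fun_comp p hf hu, ContinuousLinearMap.comp_apply]
  conv_lhs => rw [pi_eq_sum_univ' (fderiv ℝ u p (Pi.single α 1))]
  simp only [map_sum, map_smul, smul_eq_mul, hcoord]
  exact Finset.sum_congr rfl fun C _ => mul_comm _ _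

end PartialDerivatives

section BilinearForms

open Matrix

variable {ι R : Type*} [Fintype ι] [DecidableEq ι] [CommSemiring R]

theorem toBilin'_mul_add_transpose_mul (M N : Matrix ι ι R) (X Y : ι → R) :
    toBilin' (M * N + Nᵀ * M) X Y = toBilin' M X (N *ᵥ Y) + toBilin' M (N *ᵥ X) Y := by
  simp only [toBilin'_apply', add_mulVec, ← mulVec_mulVec, dotProduct_add, dotProduct_mulVec X Nᵀ,
    vecMul_transpose]

theorem sum_mul_toBilin'_eq {κ : Type*} [Fintype κ] (g : Matrix ι ι R) (c : κ → κ → R)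
    (d : κ → R) (H : κ → κ → ι → R) (v : κ → ι → R) :
    ∑ α, ∑ γ, ∑ μ, c α γ * d μ * toBilin' g (H α γ) (v μ)
      = ∑ A, ∑ B, ∑ μ, g A B * (∑ α, ∑ γ, c α γ • H α γ) A * d μ * v μ B := by
  calc _ = ∑ μ, d μ * toBilin' g (∑ α, ∑ γ, c α γ • H α γ) (v μ) := by
        rw [Finset.sum_congr rfl fun α _ => Finset.sum_comm, Finset.sum_comm]
        simp only [map_sum, map_smul, LinearMap.sum_apply, LinearMap.smul_apply, smul_eq_mul,
          Finset.mul_sum]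
        exact Finset.sum_congr rfl fun μ _ => Finset.sum_congr rfl fun α _ =>
          Finset.sum_congr rfl fun γ _ => by ring
    _ = _ := by
        simp only [toBilin'_apply, Finset.mul_sum]
        rw [Finset.sum_comm]
        refine Finset.sum_congr rfl fun A _ => ?_
        rw [Finset.sum_comm]
        exact Finset.sum_congr rfl fun B _ => Finset.sum_congr rfl fun μ _ => by ring

end BilinearForms

section Christoffel

open Matrix

variable {D : ℕ} {G : (Fin D → ℝ) → Matrix (Fin D) (Fin D) ℝ} (p : Fin D → ℝ)

theorem pd_metric_comm (hG : ∀ q, (G q).IsSymm) (C A B : Fin D) :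
    pd C (fun q => G q A B) p = pd C (fun q => G q B A) p := by
  simp_rw [(hG _).apply A B]

theorem Γchr_comm (hG : ∀ q, (G q).IsSymm) (A B C : Fin D) :
    Γchr G p A B C = Γchr G p A C B := by
  simp only [Γchr, pd_metric_comm p hG _ B C, add_comm (pd B _ p)]

theorem sum_mul_Γchr (hG : ∀ q, (G q).IsSymm) (hGinv : IsUnit (G p)) (P Q R : Fin D) :
    ∑ E, G p E P * Γchr G p E Q R
      = 1 / 2 * (pd Q (fun q => G q P R) p + pd R (fun q => G q P Q) p
          - pd P (fun q => G q Q R) p) := by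
  have hGG : G p * (G p)⁻¹ = 1 := mul_nonsing_inv _ ((isUnit_iff_isUnit_det _).mp hGinv)
  set c : Fin D → ℝ := fun E =>
    pd Q (fun q => G q E R) p + pd R (fun q => G q E Q) p - pd E (fun q => G q Q R) p
  calc ∑ E, G p E P * Γchr G p E Q R
      = 1 / 2 * ∑ F, (∑ E, G p P E * (G p)⁻¹ E F) * c F := by
        simp only [Γchr, Finset.mul_sum, Finset.sum_mul]
        rw [Finset.sum_comm]
        refine Finset.sum_congr rfl fun E _ => Finset.sum_congr rfl fun F _ => ?_
        rw [(hG p).apply]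
        ring
    _ = 1 / 2 * c P := by
        simp_rw [← mul_apply, hGG, one_apply, ite_mul, one_mul, zero_mul]
        simp

theorem pd_metric_eq_sum_Γchr (hG : ∀ q, (G q).IsSymm) (hGinv : IsUnit (G p)) (Q A B : Fin D) :
    pd Q (fun q => G q A B) p = ∑ E, G p E A * Γchr G p E Q B + ∑ E, G p E B * Γchr G p E Q A := by
  rw [sum_mul_Γchr p hG hGinv, sum_mul_Γchr p hG hGinv, pd_metric_comm p hG _ B A,
    pd_metric_comm p hG A Q B, pd_metric_comm p hG B Q A]
  ring

noncomputable def christoffelMatrix (G : (Fin D → ℝ) → Matrix (Fin D) (Fin D) ℝ)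
    (p V : Fin D → ℝ) : Matrix (Fin D) (Fin D) ℝ :=
  of fun A R => ∑ Q, Γchr G p A Q R * V Q

theorem christoffelMatrix_mulVec (V X : Fin D → ℝ) (A : Fin D) :
    (christoffelMatrix G p V *ᵥ X) A = ∑ Q, ∑ R, Γchr G p A Q R * V Q * X R := by
  simp only [christoffelMatrix, mulVec, dotProduct, of_apply, Finset.sum_mul]
  exact Finset.sum_comm

theorem christoffelMatrix_mulVec_comm (hG : ∀ q, (G q).IsSymm) (V X : Fin D → ℝ) :
    christoffelMatrix G p V *ᵥ X = christoffelMatrix G p X *ᵥ V := by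
  ext A
  rw [christoffelMatrix_mulVec, christoffelMatrix_mulVec, Finset.sum_comm]
  refine Finset.sum_congr rfl fun R _ => Finset.sum_congr rfl fun Q _ => ?_
  rw [Γchr_comm p hG]
  ring

theorem pd_metric_eq_christoffelMatrix (hG : ∀ q, (G q).IsSymm) (hGinv : IsUnit (G p))
    (V : Fin D → ℝ) :
    of (fun A B => ∑ C, pd C (fun q => G q A B) p * V C)
      = G p * christoffelMatrix G p V + (christoffelMatrix G p V)ᵀ * G p := by
  ext A B
  simp only [of_apply, pd_metric_eq_sum_Γchr p hG hGinv, Matrix.add_apply, mul_apply, transpose_apply,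
    christoffelMatrix, add_mul, Finset.sum_add_distrib, Finset.sum_mul, Finset.mul_sum]
  congr 1 <;> rw [Finset.sum_comm] <;>
    refine Finset.sum_congr rfl fun E _ => Finset.sum_congr rfl fun Q _ => ?_
  · rw [(hG p).apply]
    ring
  · ring

end Christoffel

section MapsIntoMetric

open Matrix

variable {n D : ℕ}

noncomputable def pdVec (γ : Fin n) (u : (Fin n → ℝ) → Fin D → ℝ) (y : Fin n → ℝ) : Fin D → ℝ :=
  fun A => pd γ (fun z => u z A) y

noncomputable def energyDensity (G : (Fin D → ℝ) → Matrix (Fin D) (Fin D) ℝ)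
    (u : (Fin n → ℝ) → Fin D → ℝ) (γ δ : Fin n) (y : Fin n → ℝ) : ℝ :=
  toBilin' (G (u y)) (pdVec γ u y) (pdVec δ u y)

noncomputable def covHessian (G : (Fin D → ℝ) → Matrix (Fin D) (Fin D) ℝ)
    (u : (Fin n → ℝ) → Fin D → ℝ) (x : Fin n → ℝ) (α γ : Fin n) : Fin D → ℝ :=
  pdVec α (pdVec γ u) x + christoffelMatrix G (u x) (pdVec α u x) *ᵥ pdVec γ u x

theorem pd_toBilin' {M : (Fin n → ℝ) → Matrix (Fin D) (Fin D) ℝ} {X Y : (Fin n → ℝ) → Fin D → ℝ}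
    {p : Fin n → ℝ} (hM : ∀ A B, DifferentiableAt ℝ (fun q => M q A B) p)
    (hX : ∀ A, DifferentiableAt ℝ (fun q => X q A) p)
    (hY : ∀ B, DifferentiableAt ℝ (fun q => Y q B) p) (α : Fin n) :
    pd α (fun q => toBilin' (M q) (X q) (Y q)) p
      = toBilin' (of fun A B => pd α (fun q => M q A B) p) (X p) (Y p)
        + toBilin' (M p) (pdVec α X p) (Y p) + toBilin' (M p) (X p) (pdVec α Y p) := by
  have hXM : ∀ A B, DifferentiableAt ℝ (fun q => X q A * M q A B) p :=
    fun A B => (hX A).fun_mul (hM A B)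
  have hXMY : ∀ A B, DifferentiableAt ℝ (fun q => X q A * M q A B * Y q B) p :=
    fun A B => (hXM A B).fun_mul (hY B)
  simp only [toBilin'_apply]
  rw [pd_sum _ fun A _ => DifferentiableAt.fun_sum fun B _ => hXMY A B]
  simp only [← Finset.sum_add_distrib]
  refine Finset.sum_congr rfl fun A _ => ?_
  rw [pd_sum _ fun B _ => hXMY A B]
  refine Finset.sum_congr rfl fun B _ => ?_
  rw [pd_mul (hXM A B) (hY B), pd_mul (hX A) (hM A B)]
  simp only [pdVec, of_apply]
  ring

variable {G : (Fin D → ℝ) → Matrix (Fin D) (Fin D) ℝ} {u : (Fin n → ℝ) → Fin D → ℝ}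

theorem differentiable_pdVec (hu : ContDiff ℝ 2 u) (γ : Fin n) (A : Fin D) :
    Differentiable ℝ (fun y => pdVec γ u y A) :=
  (contDiff_pd (m := 1) (contDiff_pi.mp hu A)).differentiable one_ne_zero

theorem differentiable_metric_comp (hG : ContDiff ℝ 1 G) (hu : ContDiff ℝ 2 u) (A B : Fin D) :
    Differentiable ℝ (fun y => G (u y) A B) :=
  ((contDiff_pi.mp (contDiff_pi.mp hG A) B).comp (hu.of_le one_le_two)).differentiable one_ne_zero

theorem differentiable_energyDensity (hG : ContDiff ℝ 1 G) (hu : ContDiff ℝ 2 u) (γ δ : Fin n) :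
    Differentiable ℝ (energyDensity G u γ δ) := by
  unfold energyDensity
  simp only [toBilin'_apply]
  exact Differentiable.fun_sum fun A _ => Differentiable.fun_sum fun B _ =>
    ((differentiable_pdVec hu γ A).fun_mul (differentiable_metric_comp hG hu A B)).fun_mul
      (differentiable_pdVec hu δ B)

theorem covHessian_comm (hGsymm : ∀ q, (G q).IsSymm) (hu : ContDiff ℝ 2 u) (x : Fin n → ℝ)
    (α γ : Fin n) : covHessian G u x α γ = covHessian G u x γ α := by
  have hpd : pdVec α (pdVec γ u) x = pdVec γ (pdVec α u) x :=
    funext fun A => pd_comm (contDiff_pi.mp hu A) γ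
  rw [covHessian, covHessian, hpd, christoffelMatrix_mulVec_comm _ hGsymm]

theorem pd_energyDensity (hG : ContDiff ℝ 1 G) (hGsymm : ∀ q, (G q).IsSymm)
    (hGinv : ∀ q, IsUnit (G q)) (hu : ContDiff ℝ 2 u) (x : Fin n → ℝ) (α γ δ : Fin n) :
    pd α (energyDensity G u γ δ) x
      = toBilin' (G (u x)) (covHessian G u x α γ) (pdVec δ u x)
        + toBilin' (G (u x)) (pdVec γ u x) (covHessian G u x α δ) := by
  have hchain : of (fun A B => pd α (fun y => G (u y) A B) x)
      = of fun A B => ∑ C, pd C (fun q => G q A B) (u x) * pdVec α u x C := by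
    ext A B
    exact pd_comp ((contDiff_pi.mp (contDiff_pi.mp hG A) B).differentiable one_ne_zero _)
      (hu.differentiable two_ne_zero x)
  unfold energyDensity
  rw [pd_toBilin' (fun A B => differentiable_metric_comp hG hu A B x)
    (fun A => differentiable_pdVec hu γ A x) (fun B => differentiable_pdVec hu δ B x), hchain,
    pd_metric_eq_christoffelMatrix _ hGsymm (hGinv _), toBilin'_mul_add_transpose_mul,
    covHessian, covHessian]
  simp only [map_add, LinearMap.add_apply]
  ring

end MapsIntoMetric

theorem contract_trace_reversed_of_symm {ι : Type*} [Fintype ι] [DecidableEq ι]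
    {η : Matrix ι ι ℝ} (hη : η.IsSymm) (hηη : η * η = 1) {a : ι → ι → ι → ℝ}
    (ha : ∀ α γ μ, a α γ μ = a γ α μ) (β : ι) :
    ∑ α, ∑ γ, ∑ μ, η α γ * η β μ *
        ((a α γ μ + a α μ γ) - 1 / 2 * η γ μ * ∑ ρ, ∑ σ, η ρ σ * (a α ρ σ + a α σ ρ))
      = ∑ α, ∑ γ, ∑ μ, η α γ * η β μ * a α γ μ := by
  set S : ι → ℝ := fun α => ∑ ρ, ∑ σ, η ρ σ * a α ρ σ
  have htrace : ∀ α, ∑ ρ, ∑ σ, η ρ σ * (a α ρ σ + a α σ ρ) = 2 * S α := by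
    intro α
    simp only [S, mul_add, Finset.sum_add_distrib]
    rw [Finset.sum_comm (f := fun ρ σ => η ρ σ * a α σ ρ)]
    simp_rw [hη.apply]
    ring
  have hηηη : ∀ α, ∑ γ, ∑ μ, η α γ * η β μ * η γ μ = η α β := by
    intro α
    calc ∑ γ, ∑ μ, η α γ * η β μ * η γ μ = ∑ γ, η α γ * (η * η) γ β := by
          simp only [Matrix.mul_apply, Finset.mul_sum]
          exact Finset.sum_congr rfl fun γ _ => Finset.sum_congr rfl fun μ _ => by
            rw [hη.apply β μ]
            ring
      _ = η α β := by simp [hηη, Matrix.one_apply]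
  have hswap : ∑ α, ∑ γ, ∑ μ, η α γ * η β μ * a α μ γ = ∑ μ, η β μ * S μ := by
    rw [Finset.sum_congr rfl fun α _ => Finset.sum_comm, Finset.sum_comm]
    refine Finset.sum_congr rfl fun μ _ => ?_
    simp only [S, Finset.mul_sum, ha _ μ]
    exact Finset.sum_congr rfl fun α _ => Finset.sum_congr rfl fun γ _ => by ring
  calc _ = ∑ α, ∑ γ, ∑ μ, η α γ * η β μ * a α γ μ
        + (∑ α, ∑ γ, ∑ μ, η α γ * η β μ * a α μ γ
          - ∑ α, (∑ γ, ∑ μ, η α γ * η β μ * η γ μ) * S α) := by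
        simp only [htrace, Finset.sum_mul, ← Finset.sum_sub_distrib, ← Finset.sum_add_distrib]
        exact Finset.sum_congr rfl fun α _ => Finset.sum_congr rfl fun γ _ =>
          Finset.sum_congr rfl fun μ _ => by ring
    _ = _ := by
        simp_rw [hswap, hηηη, hη.apply β]
        ring

section Minkowski

open Matrix

theorem ηmink_isSymm : ηmink.IsSymm := isSymm_diagonal _

theorem ηmink_mul_self : ηmink * ηmink = 1 := by
  rw [ηmink, diagonal_mul_diagonal, ← diagonal_one]
  congr 1
  ext i
  fin_cases i <;> norm_num

variable {D : ℕ} {G : (Fin D → ℝ) → Matrix (Fin D) (Fin D) ℝ} {u : (Fin 3 → ℝ) → Fin D → ℝ}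

theorem stressEnergy_eq_energyDensity (y : Fin 3 → ℝ) (γ δ : Fin 3) :
    stressEnergy G u y γ δ = energyDensity G u γ δ y
      - 1 / 2 * ηmink γ δ * ∑ ρ, ∑ σ, ηmink ρ σ * energyDensity G u ρ σ y := by
  simp only [stressEnergy, energyDensity, toBilin'_apply, pdVec, of_apply, Finset.mul_sum]
  congr 1 <;> refine Finset.sum_congr rfl fun _ _ => Finset.sum_congr rfl fun _ _ => ?_
  · ring
  · exact Finset.sum_congr rfl fun _ _ => Finset.sum_congr rfl fun _ _ => by ring

theorem waveMapOp_eq_sum_covHessian (x : Fin 3 → ℝ) :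
    waveMapOp G u x = ∑ γ, ∑ μ, ηmink γ μ • covHessian G u x γ μ := by
  ext A
  simp only [waveMapOp, covHessian, Finset.sum_apply, Pi.smul_apply, Pi.add_apply,
    christoffelMatrix_mulVec, smul_eq_mul]
  rfl

theorem differentiable_stressEnergy (hG : ContDiff ℝ 1 G) (hu : ContDiff ℝ 2 u) (γ δ : Fin 3) :
    Differentiable ℝ (fun y => stressEnergy G u y γ δ) := by
  simp only [stressEnergy_eq_energyDensity]
  have hE := differentiable_energyDensity hG hu
  fun_prop

theorem pd_stressEnergy (hG : ContDiff ℝ 1 G) (hu : ContDiff ℝ 2 u) (x : Fin 3 → ℝ)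
    (α γ δ : Fin 3) :
    pd α (fun y => stressEnergy G u y γ δ) x = pd α (energyDensity G u γ δ) x
      - 1 / 2 * ηmink γ δ * ∑ ρ, ∑ σ, ηmink ρ σ * pd α (energyDensity G u ρ σ) x := by
  have hE : ∀ ρ σ, DifferentiableAt ℝ (energyDensity G u ρ σ) x :=
    fun ρ σ => differentiable_energyDensity hG hu ρ σ x
  have hS : ∀ ρ, DifferentiableAt ℝ (fun y => ∑ σ, ηmink ρ σ * energyDensity G u ρ σ y) x :=
    fun ρ => DifferentiableAt.fun_sum fun σ _ => (hE ρ σ).const_mul _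
  simp only [stressEnergy_eq_energyDensity]
  rw [pd_sub (hE γ δ) ((DifferentiableAt.fun_sum fun ρ _ => hS ρ).const_mul _),
    pd_const_mul (DifferentiableAt.fun_sum fun ρ _ => hS ρ), pd_sum _ fun ρ _ => hS ρ]
  congr 2
  refine Finset.sum_congr rfl fun ρ _ => ?_
  rw [pd_sum _ fun σ _ => (hE ρ σ).const_mul _]
  exact Finset.sum_congr rfl fun σ _ => pd_const_mul (hE ρ σ) _

theorem pd_sum_mul_stressEnergy (hG : ContDiff ℝ 1 G) (hu : ContDiff ℝ 2 u) (x : Fin 3 → ℝ)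
    (α β : Fin 3) :
    pd α (fun y => ∑ γ, ∑ μ, ηmink α γ * ηmink β μ * stressEnergy G u y γ μ) x
      = ∑ γ, ∑ μ, ηmink α γ * ηmink β μ * pd α (fun y => stressEnergy G u y γ μ) x := by
  have hT : ∀ γ μ, DifferentiableAt ℝ (fun y => stressEnergy G u y γ μ) x :=
    fun γ μ => differentiable_stressEnergy hG hu γ μ x
  rw [pd_sum _ fun γ _ => DifferentiableAt.fun_sum fun μ _ => (hT γ μ).const_mul _]
  refine Finset.sum_congr rfl fun γ _ => ?_
  rw [pd_sum _ fun μ _ => (hT γ μ).const_mul _]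
  exact Finset.sum_congr rfl fun μ _ => pd_const_mul (hT γ μ) _

end Minkowski

theorem stress_energy_divergence_eq_waveMapOp_inner_general
    (D : ℕ)
    (G : (Fin D → ℝ) → Matrix (Fin D) (Fin D) ℝ)
    (hG : ContDiff ℝ 1 G)
    (hGsymm : ∀ p, (G p).IsSymm) (hGinv : ∀ p, IsUnit (G p))
    (u : (Fin 3 → ℝ) → (Fin D → ℝ)) (hu : ContDiff ℝ 2 u)
    (x : Fin 3 → ℝ) (β : Fin 3) :
    ∑ α : Fin 3,
        pd α (fun y => ∑ lam : Fin 3, ∑ mu : Fin 3,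
          ηmink α lam * ηmink β mu * stressEnergy G u y lam mu) x
      = ∑ A : Fin D, ∑ B : Fin D, ∑ γ : Fin 3,
          G (u x) A B * waveMapOp G u x A * ηmink β γ * pd γ (fun y => u y B) x := by
  set a : Fin 3 → Fin 3 → Fin 3 → ℝ :=
    fun α γ μ => Matrix.toBilin' (G (u x)) (covHessian G u x α γ) (pdVec μ u x)
  have hg : ∀ X Y, Matrix.toBilin' (G (u x)) X Y = Matrix.toBilin' (G (u x)) Y X :=
    (Matrix.isSymm_toBilin'_iff_isSymm.mpr (hGsymm (u x))).eq
  have ha : ∀ α γ μ, a α γ μ = a γ α μ := fun α γ μ => by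
    dsimp only [a]
    rw [covHessian_comm hGsymm hu x α γ]
  calc _ = ∑ α, ∑ γ, ∑ μ, ηmink α γ * ηmink β μ * ((a α γ μ + a α μ γ)
          - 1 / 2 * ηmink γ μ * ∑ ρ, ∑ σ, ηmink ρ σ * (a α ρ σ + a α σ ρ)) := by
        simp only [pd_sum_mul_stressEnergy hG hu, pd_stressEnergy hG hu,
          pd_energyDensity hG hGsymm hGinv hu, hg (pdVec _ u x), a]
    _ = ∑ α, ∑ γ, ∑ μ, ηmink α γ * ηmink β μ * a α γ μ :=
        contract_trace_reversed_of_symm ηmink_isSymm ηmink_mul_self ha β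
    _ = _ := by
        rw [waveMapOp_eq_sum_covHessian]
        exact sum_mul_toBilin'_eq _ _ _ _ _

/-- Identity 5.1 for a flat Minkowski domain: the divergence of the stress-energy tensor of a
map `u : ℝ^{1,2} → (ℝ^D, G)` equals the `G`-scalar product of the wave-map operator applied to
`u` with `∂^β u`. -/
theorem stress_energy_divergence_eq_waveMapOp_inner
    (D : ℕ) (hD : 1 ≤ D)
    (G : (Fin D → ℝ) → Matrix (Fin D) (Fin D) ℝ)
    (hG : ContDiff ℝ 1 G)
    (hGsymm : ∀ p, (G p).IsSymm) (hGinv : ∀ p, IsUnit (G p))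
    (u : (Fin 3 → ℝ) → (Fin D → ℝ)) (hu : ContDiff ℝ 2 u)
    (x : Fin 3 → ℝ) (β : Fin 3) :
    ∑ α : Fin 3,
        pd α (fun y => ∑ lam : Fin 3, ∑ mu : Fin 3,
          ηmink α lam * ηmink β mu * stressEnergy G u y lam mu) x
      = ∑ A : Fin D, ∑ B : Fin D, ∑ γ : Fin 3,
          G (u x) A B * waveMapOp G u x A * ηmink β γ * pd γ (fun y => u y B) x :=
  stress_energy_divergence_eq_waveMapOp_inner_general D G hG hGsymm hGinv u hu x β
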